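/- Given a rotation group D on a three-dimensional real vector space V and a D-orbit l ⊂ V \ {0} with associated norm ‖·‖_l (defined by ‖λ v‖ = λ for λ ≥ 0 and v ∈ l), the map b(v,w) := ‖v‖² α_v(w)/2 for v ≠ 0 and b(0,w) := 0 is a D-invariant inner product on V satisfying b(v,v) = ‖v‖² for all v. -/

import Mathlib

/-- The ray (half-line) spanned by `v`: all nonnegative multiples of `v`. -/
def Ray' {V : Type*} [AddCommGroup V] [Module ℝ V] (v : V) : Set V :=
  {x | ∃ c : ℝ, 0 ≤ c ∧ x = c • v}

/-- The half-plane `ℝ v + ℝ≥0 w`. -/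
def HalfPlane {V : Type*} [AddCommGroup V] [Module ℝ V] (v w : V) : Set V :=
  {x | ∃ a b : ℝ, 0 ≤ b ∧ x = a • v + b • w}

/-- `D` is a rotation group: for any two pairs of (half-plane, ray on its boundary)
there is exactly one element of `D` mapping the first pair to the second. -/
def IsRotationGroup {V : Type*} [AddCommGroup V] [Module ℝ V]
    (D : Subgroup (V ≃ₗ[ℝ] V)) : Prop :=
  ∀ v w v' w' : V, LinearIndependent ℝ ![v, w] → LinearIndependent ℝ ![v', w'] →
    ∃! d : V ≃ₗ[ℝ] V, d ∈ D ∧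
      (d : V ≃ₗ[ℝ] V) '' HalfPlane v w = HalfPlane v' w' ∧
      (d : V ≃ₗ[ℝ] V) '' Ray' v = Ray' v'

/-- `w ⊥ v` : some rotation sends `w` to `-w` and fixes `v`. -/
def Perp {V : Type*} [AddCommGroup V] [Module ℝ V]
    (D : Subgroup (V ≃ₗ[ℝ] V)) (w v : V) : Prop :=
  ∃ r ∈ D, r w = -w ∧ r v = v


/-!
Every nonzero vector is a positive multiple of a point of `l`, so `N` is positive, positively
homogeneous and `D`-invariant. Uniqueness in the definition of a rotation group makes the
half-turns equivariant, `r (g m) = g * r m * g⁻¹` and `r (c • m) = r m`; hence `α` is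
`D`-invariant and `α v u = 0 ↔ α u v = 0`, which gives everything but the symmetry of `b`.
For symmetry take `v`, `w` with `N v = N w` spanning a plane and `u` perpendicular to both.
The rotation `ρ` about `u` carrying `v` to `w` preserves the plane, and `ρ` or `ρ * r v` acts on
it with negative determinant, so it has a positive eigenvalue, which is `1` because `N` is
preserved. For `ρ` this forces `ρ = 1`, which is absurd; so `ρ * r v` is the half-turn about its
fixed vector, it swaps `v` and `w`, and invariance of `α` gives `α v w = α w v`.
-/

section LinearAlgebra

variable {V : Type*} [AddCommGroup V] [Module ℝ V]

lemma image_halfPlane (e : V ≃ₗ[ℝ] V) (v w : V) :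
    e '' HalfPlane v w = HalfPlane (e v) (e w) := by
  ext x
  constructor
  · rintro ⟨y, ⟨a, b, hb, rfl⟩, rfl⟩
    exact ⟨a, b, hb, by simp⟩
  · rintro ⟨a, b, hb, rfl⟩
    exact ⟨a • v + b • w, ⟨a, b, hb, rfl⟩, by simp⟩

lemma image_ray (e : V ≃ₗ[ℝ] V) (v : V) : e '' Ray' v = Ray' (e v) := by
  ext x
  constructor
  · rintro ⟨y, ⟨c, hc, rfl⟩, rfl⟩
    exact ⟨c, hc, by simp⟩
  · rintro ⟨c, hc, rfl⟩
    exact ⟨c • v, ⟨c, hc, rfl⟩, by simp⟩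

lemma self_mem_ray (v : V) : v ∈ Ray' v := ⟨1, zero_le_one, (one_smul ℝ v).symm⟩

lemma right_mem_halfPlane (v w : V) : w ∈ HalfPlane v w := ⟨0, 1, zero_le_one, by simp⟩

lemma linearIndependent_pair_of_apply_eq_zero (f : V →ₗ[ℝ] ℝ) {v w : V} (hv : f v ≠ 0)
    (hw : w ≠ 0) (hfw : f w = 0) : LinearIndependent ℝ ![v, w] := by
  refine LinearIndependent.pair_iff.mpr fun s t hst => ?_
  have hs : s = 0 := by simpa [hfw, hv] using congrArg f hst
  subst hs
  exact ⟨rfl, by simpa [hw] using hst⟩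

lemma LinearIndependent.pair_map {v w : V} (h : LinearIndependent ℝ ![v, w])
    (e : V ≃ₗ[ℝ] V) : LinearIndependent ℝ ![e v, e w] := by
  have : ![e v, e w] = e ∘ ![v, w] := by
    ext i
    fin_cases i <;> rfl
  exact this ▸ h.map' e.toLinearMap e.ker

lemma exists_ne_zero_apply_eq_zero {W : Type*} [AddCommGroup W] [Module ℝ W]
    [FiniteDimensional ℝ W] (f : V →ₗ[ℝ] W)
    (h : Module.finrank ℝ W < Module.finrank ℝ V) :
    ∃ u : V, u ≠ 0 ∧ f u = 0 := by
  have := Module.finite_of_finrank_pos (Nat.zero_lt_of_lt h)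
  obtain ⟨u, hu, hu0⟩ :=
    Submodule.exists_mem_ne_zero_of_ne_bot (LinearMap.ker_ne_bot_of_finrank_lt h)
  exact ⟨u, hu0, hu⟩

lemma exists_eq_smul_add_smul_of_apply_eq_zero (hdim : Module.finrank ℝ V = 3)
    {f : V →ₗ[ℝ] ℝ} (hf : f ≠ 0) {v w : V} (hvw : LinearIndependent ℝ ![v, w])
    (hv : f v = 0) (hw : f w = 0) {z : V} (hz : f z = 0) :
    ∃ a b : ℝ, z = a • v + b • w := by
  have : FiniteDimensional ℝ V := Module.finite_of_finrank_eq_succ hdim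
  have hker : Module.finrank ℝ (LinearMap.ker f) = 2 := by
    have := f.finrank_range_add_finrank_ker
    rw [LinearMap.range_eq_top.mpr (f.surjective_of_ne_zero hf), finrank_top,
      Module.finrank_self, hdim] at this
    omega
  have hspan : Submodule.span ℝ (Set.range ![v, w]) = LinearMap.ker f := by
    refine Submodule.eq_of_le_of_finrank_eq ?_ (by rw [finrank_span_eq_card hvw, hker]; simp)
    rw [Submodule.span_le, Set.range_subset_iff]
    intro i
    fin_cases i <;> simpa
  have hzspan : z ∈ Submodule.span ℝ (Set.range ![v, w]) := hspan ▸ hz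
  obtain ⟨c, rfl⟩ := (Submodule.mem_span_range_iff_exists_fun ℝ).mp hzspan
  exact ⟨c 0, c 1, by simp [Fin.sum_univ_two]⟩

lemma LinearMap.exists_pos_eigenvector_of_apply_eq (e : V →ₗ[ℝ] V) {v w : V} {a b : ℝ}
    (hb : 0 < b) (hv : e v = w) (hw : e w = b • v + a • w) :
    ∃ c t : ℝ, 0 < t ∧ e (c • v + w) = t • (c • v + w) := by
  -- `t` is the positive root of `t ^ 2 - a t - b`, the characteristic polynomial on `span {v, w}`.
  set s := √(a ^ 2 + 4 * b)
  have hs : s ^ 2 = a ^ 2 + 4 * b := Real.sq_sqrt (by positivity)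
  have hsa : |a| < s := by
    rw [← Real.sqrt_sq_eq_abs]
    exact Real.sqrt_lt_sqrt (sq_nonneg a) (by linarith)
  have ht : 0 < (a + s) / 2 := by linarith [neg_abs_le a]
  refine ⟨(a + s) / 2 - a, (a + s) / 2, ht, ?_⟩
  rw [map_add, map_smul, hv, hw, smul_add, smul_smul]
  match_scalars
  · ring
  · linear_combination (-1 / 4 : ℝ) * hs

end LinearAlgebra

structure IsInvariantGauge {V : Type*} [AddCommGroup V] [Module ℝ V]
    (D : Subgroup (V ≃ₗ[ℝ] V)) (N : V → ℝ) : Prop where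
  pos : ∀ x, x ≠ 0 → 0 < N x
  smul : ∀ c : ℝ, 0 ≤ c → ∀ x, N (c • x) = c * N x
  map : ∀ g ∈ D, ∀ x, N (g x) = N x

namespace IsRotationGroup

variable {V : Type*} [AddCommGroup V] [Module ℝ V] {D : Subgroup (V ≃ₗ[ℝ] V)} {x₀ : V}

lemma ext_of_linearIndependent (hD : IsRotationGroup D) {g g' : V ≃ₗ[ℝ] V} (hg : g ∈ D)
    (hg' : g' ∈ D) {v w : V} (hvw : LinearIndependent ℝ ![v, w]) (hv : g v = g' v)
    (hw : g w = g' w) : g = g' := by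
  obtain ⟨d, -, hd⟩ := hD v w (g v) (g w) hvw (hvw.pair_map g)
  exact (hd g ⟨hg, image_halfPlane g v w, image_ray g v⟩).trans
    (hd g' ⟨hg', by rw [image_halfPlane, hv, hw], by rw [image_ray, hv]⟩).symm

lemma exists_eq_smul_apply (hD : IsRotationGroup D)
    (hdim : 1 < Module.finrank ℝ V) (hx₀ : x₀ ≠ 0) {x : V} (hx : x ≠ 0) :
    ∃ c : ℝ, 0 < c ∧ ∃ d ∈ D, x = c • d x₀ := by
  obtain ⟨y, hy⟩ := exists_linearIndependent_pair_of_one_lt_finrank hdim hx₀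
  obtain ⟨z, hz⟩ := exists_linearIndependent_pair_of_one_lt_finrank hdim hx
  obtain ⟨d, ⟨hd, -, hray⟩, -⟩ := hD x₀ y x z hy hz
  obtain ⟨c, hc, hdx⟩ : d x₀ ∈ Ray' x := hray ▸ Set.mem_image_of_mem d (self_mem_ray x₀)
  have hc0 : c ≠ 0 := by
    rintro rfl
    exact d.map_ne_zero_iff.mpr hx₀ (by simpa using hdx)
  exact ⟨c⁻¹, by positivity, d, hd, by rw [hdx, inv_smul_smul₀ hc0]⟩

lemma isInvariantGauge_of_orbit (hD : IsRotationGroup D)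
    (hdim : 1 < Module.finrank ℝ V) (hx₀ : x₀ ≠ 0) {N : V → ℝ}
    (hN : ∀ c : ℝ, 0 ≤ c → ∀ d ∈ D, N (c • d x₀) = c) : IsInvariantGauge D N := by
  have hN0 : N 0 = 0 := by simpa using hN 0 le_rfl 1 (one_mem D)
  refine ⟨fun x hx => ?_, fun c hc x => ?_, fun g hg x => ?_⟩
  · obtain ⟨c, hc, d, hd, rfl⟩ := hD.exists_eq_smul_apply hdim hx₀ hx
    rwa [hN c hc.le d hd]
  · rcases eq_or_ne x 0 with rfl | hx
    · simp [hN0]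
    obtain ⟨c', hc', d, hd, rfl⟩ := hD.exists_eq_smul_apply hdim hx₀ hx
    rw [smul_smul, hN _ (by positivity) d hd, hN c' hc'.le d hd]
  · rcases eq_or_ne x 0 with rfl | hx
    · simp
    obtain ⟨c, hc, d, hd, rfl⟩ := hD.exists_eq_smul_apply hdim hx₀ hx
    rw [map_smul, ← LinearEquiv.mul_apply, hN c hc.le _ (mul_mem hg hd), hN c hc.le d hd]

end IsRotationGroup

structure IsHalfTurnFamily {V : Type*} [AddCommGroup V] [Module ℝ V]
    (D : Subgroup (V ≃ₗ[ℝ] V)) (r : V → V ≃ₗ[ℝ] V) (α : V → V →ₗ[ℝ] ℝ) :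
    Prop where
  mem : ∀ v, v ≠ 0 → r v ∈ D
  apply_self : ∀ v, v ≠ 0 → r v v = v
  apply_of_perp : ∀ v, v ≠ 0 → ∀ u, Perp D u v → r v u = -u
  apply_add_self : ∀ v, v ≠ 0 → ∀ w, r v w + w = α v w • v

namespace IsHalfTurnFamily

variable {V : Type*} [AddCommGroup V] [Module ℝ V] {D : Subgroup (V ≃ₗ[ℝ] V)}
  {r : V → V ≃ₗ[ℝ] V} {α : V → V →ₗ[ℝ] ℝ} {m : V}

lemma apply_eq (h : IsHalfTurnFamily D r α) (hm : m ≠ 0) (z : V) : r m z = α m z • m - z :=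
  eq_sub_of_add_eq (h.apply_add_self m hm z)

lemma alpha_self (h : IsHalfTurnFamily D r α) (hm : m ≠ 0) : α m m = 2 := by
  have := h.apply_add_self m hm m
  rw [h.apply_self m hm, ← two_smul ℝ m] at this
  exact (smul_left_injective ℝ hm this).symm

lemma apply_eq_neg_iff (h : IsHalfTurnFamily D r α) (hm : m ≠ 0) {u : V} :
    r m u = -u ↔ α m u = 0 := by
  rw [h.apply_eq hm, sub_eq_neg_self, smul_eq_zero, or_iff_left hm]

lemma apply_apply (h : IsHalfTurnFamily D r α) (hm : m ≠ 0) (z : V) : r m (r m z) = z := by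
  rw [h.apply_eq hm (r m z), h.apply_eq hm z, map_sub, map_smul, h.alpha_self hm]
  module

lemma linearIndependent_of_alpha_eq_zero (h : IsHalfTurnFamily D r α) (hm : m ≠ 0) {u : V}
    (hu : u ≠ 0) (hmu : α m u = 0) : LinearIndependent ℝ ![m, u] :=
  linearIndependent_pair_of_apply_eq_zero (α m) (by simp [h.alpha_self hm]) hu hmu

lemma eq_of_apply_eq_self_of_apply_eq_neg (h : IsHalfTurnFamily D r α) (hD : IsRotationGroup D)
    {g : V ≃ₗ[ℝ] V} (hg : g ∈ D) (hm : m ≠ 0) {u : V} (hu : u ≠ 0) (hgm : g m = m)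
    (hgu : g u = -u) : g = r m := by
  have hru : r m u = -u := h.apply_of_perp m hm u ⟨g, hg, hgu, hgm⟩
  exact hD.ext_of_linearIndependent hg (h.mem m hm)
    (h.linearIndependent_of_alpha_eq_zero hm hu ((h.apply_eq_neg_iff hm).mp hru))
    (by rw [hgm, h.apply_self m hm]) (by rw [hgu, hru])

lemma apply_map (h : IsHalfTurnFamily D r α) (hD : IsRotationGroup D)
    (hdim : 1 < Module.finrank ℝ V) {g : V ≃ₗ[ℝ] V} (hg : g ∈ D) (hm : m ≠ 0) (z : V) :
    r (g m) (g z) = g (r m z) := by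
  obtain ⟨u, hu, hmu⟩ := exists_ne_zero_apply_eq_zero (α m) (by rwa [Module.finrank_self])
  have hconj : g * r m * g⁻¹ = r (g m) :=
    h.eq_of_apply_eq_self_of_apply_eq_neg hD (mul_mem (mul_mem hg (h.mem m hm)) (inv_mem hg))
      (g.map_ne_zero_iff.mpr hm) (g.map_ne_zero_iff.mpr hu)
      (by simp [h.apply_self m hm]) (by simp [(h.apply_eq_neg_iff hm).mpr hmu])
  rw [← hconj]
  simp

lemma alpha_map (h : IsHalfTurnFamily D r α) (hD : IsRotationGroup D)
    (hdim : 1 < Module.finrank ℝ V) {g : V ≃ₗ[ℝ] V} (hg : g ∈ D) (hm : m ≠ 0) (z : V) :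
    α (g m) (g z) = α m z := by
  have hgm : g m ≠ 0 := g.map_ne_zero_iff.mpr hm
  have := h.apply_add_self (g m) hgm (g z)
  rw [h.apply_map hD hdim hg hm, ← map_add, h.apply_add_self m hm, map_smul] at this
  exact (smul_left_injective ℝ hgm this).symm

lemma smul_axis_eq (h : IsHalfTurnFamily D r α) (hD : IsRotationGroup D)
    (hdim : 1 < Module.finrank ℝ V) {c : ℝ} (hc : c ≠ 0) (hm : m ≠ 0) :
    r (c • m) = r m := by
  obtain ⟨u, hu, hmu⟩ := exists_ne_zero_apply_eq_zero (α m) (by rwa [Module.finrank_self])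
  exact (h.eq_of_apply_eq_self_of_apply_eq_neg hD (h.mem m hm) (smul_ne_zero hc hm) hu
    (by rw [map_smul, h.apply_self m hm]) ((h.apply_eq_neg_iff hm).mpr hmu)).symm

lemma alpha_smul_left (h : IsHalfTurnFamily D r α) (hD : IsRotationGroup D)
    (hdim : 1 < Module.finrank ℝ V) {c : ℝ} (hc : c ≠ 0) (hm : m ≠ 0) (z : V) :
    α (c • m) z = c⁻¹ * α m z := by
  have := h.apply_add_self (c • m) (smul_ne_zero hc hm) z
  rw [h.smul_axis_eq hD hdim hc hm, h.apply_add_self m hm, smul_smul] at this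
  rw [smul_left_injective ℝ hm this, mul_comm, mul_inv_cancel_right₀ hc]

lemma alpha_eq_zero_comm (h : IsHalfTurnFamily D r α) (hD : IsRotationGroup D)
    (hdim : 1 < Module.finrank ℝ V) {u v : V} (hu : u ≠ 0) (hv : v ≠ 0) (hvu : α v u = 0) :
    α u v = 0 := by
  have hrvu : r v u = -u := (h.apply_eq_neg_iff hv).mpr hvu
  -- `r v` reverses `u`, so it commutes with `r u = r (-u)`.
  have hcomm : r u (r v v) = r v (r u v) := by
    rw [← h.apply_map hD hdim (h.mem v hv) hu, hrvu, ← neg_one_smul ℝ u,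
      h.smul_axis_eq hD hdim (by norm_num) hu]
  rw [h.apply_self v hv, h.apply_eq hu, map_sub, map_smul, hrvu, h.apply_self v hv] at hcomm
  have : (2 * α u v) • u = 0 := by
    rw [mul_smul, two_smul]
    linear_combination (norm := module) hcomm
  simpa [hu] using this

end IsHalfTurnFamily

namespace IsInvariantGauge

variable {V : Type*} [AddCommGroup V] [Module ℝ V] {D : Subgroup (V ≃ₗ[ℝ] V)}
  {N : V → ℝ}

lemma apply_zero (hN : IsInvariantGauge D N) : N 0 = 0 := by
  simpa using hN.smul 0 le_rfl 0

lemma eq_one_of_apply_eq_smul (hN : IsInvariantGauge D N) {g : V ≃ₗ[ℝ] V} (hg : g ∈ D)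
    {m : V} (hm : m ≠ 0) {c : ℝ} (hc : 0 ≤ c) (hgm : g m = c • m) : c = 1 := by
  have := hN.map g hg m
  rw [hgm, hN.smul c hc] at this
  exact (mul_eq_right₀ (hN.pos m hm).ne').mp this

lemma apply_neg (hN : IsInvariantGauge D N) {r : V → V ≃ₗ[ℝ] V}
    {α : V → V →ₗ[ℝ] ℝ} (h : IsHalfTurnFamily D r α) (hD : IsRotationGroup D)
    (hdim : 1 < Module.finrank ℝ V) (x : V) : N (-x) = N x := by
  rcases eq_or_ne x 0 with rfl | hx
  · rw [neg_zero]
  obtain ⟨u, hu, hxu⟩ := exists_ne_zero_apply_eq_zero (α x) (by rwa [Module.finrank_self])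
  have hrux : r u x = -x := (h.apply_eq_neg_iff hu).mpr (h.alpha_eq_zero_comm hD hdim hu hx hxu)
  rw [← hrux, hN.map _ (h.mem u hu)]

lemma apply_smul_abs (hN : IsInvariantGauge D N) {r : V → V ≃ₗ[ℝ] V}
    {α : V → V →ₗ[ℝ] ℝ} (h : IsHalfTurnFamily D r α) (hD : IsRotationGroup D)
    (hdim : 1 < Module.finrank ℝ V) (c : ℝ) (x : V) : N (c • x) = |c| * N x := by
  rcases le_or_gt 0 c with hc | hc
  · rw [hN.smul c hc, abs_of_nonneg hc]
  · rw [← neg_smul_neg, hN.smul _ (by linarith), hN.apply_neg h hD hdim, abs_of_neg hc]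

lemma exists_apply_smul_add_eq_self (hN : IsInvariantGauge D N) {g : V ≃ₗ[ℝ] V} (hg : g ∈ D)
    {v w : V} (hvw : LinearIndependent ℝ ![v, w]) {a b : ℝ} (hb : 0 < b) (hgv : g v = w)
    (hgw : g w = b • v + a • w) :
    ∃ c : ℝ, c • v + w ≠ 0 ∧ g (c • v + w) = c • v + w := by
  obtain ⟨c, t, ht, hgt⟩ :=
    LinearMap.exists_pos_eigenvector_of_apply_eq g.toLinearMap hb hgv hgw
  have hm : c • v + w ≠ 0 := fun h0 => by simpa using (hvw.eq_zero_of_pair (t := 1) (by simpa))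
  refine ⟨c, hm, ?_⟩
  have ht1 := hN.eq_one_of_apply_eq_smul hg hm ht.le hgt
  rwa [ht1, one_smul] at hgt

end IsInvariantGauge

section Symmetry

variable {V : Type*} [AddCommGroup V] [Module ℝ V] {D : Subgroup (V ≃ₗ[ℝ] V)}
  {r : V → V ≃ₗ[ℝ] V} {α : V → V →ₗ[ℝ] ℝ} {N : V → ℝ}

lemma IsHalfTurnFamily.exists_mem_apply_eq_self_apply_eq (h : IsHalfTurnFamily D r α)
    (hD : IsRotationGroup D) (hdim : 1 < Module.finrank ℝ V) (hN : IsInvariantGauge D N)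
    {u v w : V} (hu : u ≠ 0) (hv : v ≠ 0) (hw : w ≠ 0) (huv : α u v = 0) (huw : α u w = 0)
    (hNvw : N v = N w) : ∃ ρ ∈ D, ρ u = u ∧ ρ v = w := by
  obtain ⟨ρ, ⟨hρ, hplane, hray⟩, -⟩ := hD u v u w
    (h.linearIndependent_of_alpha_eq_zero hu hv huv)
    (h.linearIndependent_of_alpha_eq_zero hu hw huw)
  obtain ⟨c, hc, hρu⟩ : ρ u ∈ Ray' u := hray ▸ Set.mem_image_of_mem ρ (self_mem_ray u)
  rw [hN.eq_one_of_apply_eq_smul hρ hu hc hρu, one_smul] at hρu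
  obtain ⟨p, q, hq, hρv⟩ : ρ v ∈ HalfPlane u w :=
    hplane ▸ Set.mem_image_of_mem ρ (right_mem_halfPlane u v)
  have hp : p = 0 := by
    have := h.alpha_map hD hdim hρ hu v
    rw [hρu, hρv, huv, map_add, map_smul, map_smul, h.alpha_self hu, huw] at this
    simpa using this
  have hq1 : q = 1 := by
    have := hN.map ρ hρ v
    rw [hρv, hp, zero_smul, zero_add, hN.smul q hq, hNvw] at this
    exact (mul_eq_right₀ (hN.pos w hw).ne').mp this
  exact ⟨ρ, hρ, hρu, by rw [hρv, hp, hq1, zero_smul, zero_add, one_smul]⟩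

lemma IsHalfTurnFamily.alpha_comm_of_linearIndependent (h : IsHalfTurnFamily D r α)
    (hD : IsRotationGroup D) (hdim : Module.finrank ℝ V = 3) (hN : IsInvariantGauge D N)
    {v w : V} (hvw : LinearIndependent ℝ ![v, w]) (hNvw : N v = N w) : α v w = α w v := by
  have hv : v ≠ 0 := by simpa using hvw.ne_zero 0
  have hw : w ≠ 0 := by simpa using hvw.ne_zero 1
  have hdim₁ : 1 < Module.finrank ℝ V := by omega
  obtain ⟨u, hu, hvu, hwu⟩ : ∃ u : V, u ≠ 0 ∧ α v u = 0 ∧ α w u = 0 := by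
    obtain ⟨u, hu, huvw⟩ := exists_ne_zero_apply_eq_zero ((α v).prod (α w)) (by simp [hdim])
    exact ⟨u, hu, congrArg Prod.fst huvw, congrArg Prod.snd huvw⟩
  have huv := h.alpha_eq_zero_comm hD hdim₁ hu hv hvu
  have huw := h.alpha_eq_zero_comm hD hdim₁ hu hw hwu
  obtain ⟨ρ, hρ, hρu, hρv⟩ :=
    h.exists_mem_apply_eq_self_apply_eq hD hdim₁ hN hu hv hw huv huw hNvw
  obtain ⟨x, y, hρw⟩ := exists_eq_smul_add_smul_of_apply_eq_zero hdim
    (fun h0 => by simpa [h0] using h.alpha_self hu) hvw huv huw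
    (by rw [← hρu, h.alpha_map hD hdim₁ hρ hu, huw])
  -- On the plane of `v` and `w`, `ρ` has determinant `-x` and `ρ * r v` has determinant `x`.
  rcases lt_trichotomy x 0 with hx | rfl | hx
  · set g := ρ * r v
    have hg : g ∈ D := mul_mem hρ (h.mem v hv)
    have hgv : g v = w := by simp [g, h.apply_self v hv, hρv]
    have hgw : g w = (-x) • v + (α v w - y) • w := by
      simp only [g, LinearEquiv.mul_apply, h.apply_eq hv w, map_sub, map_smul, hρv, hρw]
      module
    obtain ⟨c, hm, hgm⟩ := hN.exists_apply_smul_add_eq_self hg hvw (neg_pos.mpr hx) hgv hgw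
    have hgu : g u = -u := by simp [g, (h.apply_eq_neg_iff hv).mpr hvu, hρu]
    have hgr : g = r (c • v + w) := h.eq_of_apply_eq_self_of_apply_eq_neg hD hg hm hu hgm hgu
    have hgw' : g w = v := by
      calc g w = g (g v) := by rw [hgv]
        _ = v := by rw [hgr, h.apply_apply hm]
    rw [← h.alpha_map hD hdim₁ hg hv w, hgv, hgw']
  · have : ρ w = ρ (y • v) := by rw [map_smul, hρv, hρw, zero_smul, zero_add]
    exact absurd (ρ.injective this).symm ((LinearIndependent.pair_iff' hv).mp hvw y)
  · obtain ⟨c, hm, hρm⟩ := hN.exists_apply_smul_add_eq_self hρ hvw hx hρv hρw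
    have hρ1 : ρ = 1 := hD.ext_of_linearIndependent hρ (one_mem D)
      (h.linearIndependent_of_alpha_eq_zero hu hm (by simp [huv, huw])) (by simp [hρu])
      (by simp [hρm])
    refine absurd ?_ ((LinearIndependent.pair_iff' hv).mp hvw 1)
    rw [one_smul, ← hρv, hρ1, LinearEquiv.coe_one, id]

lemma IsHalfTurnFamily.alpha_comm_of_eq_smul (h : IsHalfTurnFamily D r α)
    (hD : IsRotationGroup D) (hdim : 1 < Module.finrank ℝ V) (hN : IsInvariantGauge D N)
    {v : V} (hv : v ≠ 0) {c : ℝ} (hNv : N v = N (c • v)) :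
    α v (c • v) = α (c • v) v := by
  have hc : |c| = 1 := by
    rw [hN.apply_smul_abs h hD hdim] at hNv
    exact (mul_eq_right₀ (hN.pos v hv).ne').mp hNv.symm
  have hc0 : c ≠ 0 := by rintro rfl; simp at hc
  rw [map_smul, h.alpha_smul_left hD hdim hc0 hv, h.alpha_self hv]
  rcases (abs_eq zero_le_one).mp hc with rfl | rfl <;> norm_num

lemma IsHalfTurnFamily.alpha_comm_of_gauge_eq (h : IsHalfTurnFamily D r α)
    (hD : IsRotationGroup D) (hdim : Module.finrank ℝ V = 3) (hN : IsInvariantGauge D N)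
    {v w : V} (hv : v ≠ 0) (hNvw : N v = N w) : α v w = α w v := by
  by_cases hvw : LinearIndependent ℝ ![v, w]
  · exact h.alpha_comm_of_linearIndependent hD hdim hN hvw hNvw
  · obtain ⟨c, rfl⟩ : ∃ c : ℝ, c • v = w := by
      simpa [LinearIndependent.pair_iff' hv] using hvw
    exact h.alpha_comm_of_eq_smul hD (by omega) hN hv hNvw

lemma IsHalfTurnFamily.sq_mul_alpha_comm (h : IsHalfTurnFamily D r α)
    (hD : IsRotationGroup D) (hdim : Module.finrank ℝ V = 3) (hN : IsInvariantGauge D N)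
    (v w : V) : N v ^ 2 * α v w = N w ^ 2 * α w v := by
  rcases eq_or_ne v 0 with rfl | hv
  · simp [hN.apply_zero]
  rcases eq_or_ne w 0 with rfl | hw
  · simp [hN.apply_zero]
  have hNv := hN.pos v hv
  have hNw := hN.pos w hw
  have hk : 0 < N v / N w := by positivity
  have := h.alpha_comm_of_gauge_eq hD hdim hN hv
    (by rw [hN.smul _ hk.le, div_mul_cancel₀ _ hNw.ne'] : N v = N ((N v / N w) • w))
  rw [map_smul, h.alpha_smul_left hD (by omega) hk.ne' hw, smul_eq_mul] at this
  field_simp at this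
  linear_combination this

end Symmetry

theorem stmt13 {V : Type*} [AddCommGroup V] [Module ℝ V]
    (hdim : Module.finrank ℝ V = 3)
    (D : Subgroup (V ≃ₗ[ℝ] V)) (hD : IsRotationGroup D)
    (r : V → (V ≃ₗ[ℝ] V))
    (hr : ∀ v : V, v ≠ 0 → r v ∈ D ∧ (r v) v = v ∧
      ∀ u : V, Perp D u v → (r v) u = -u)
    (α : V → (V →ₗ[ℝ] ℝ))
    (hα : ∀ v : V, v ≠ 0 → ∀ w : V, (r v) w + w = α v w • v)
    (x₀ : V) (hx₀ : x₀ ≠ 0)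
    (l : Set V) (hl : l = {y : V | ∃ d : V ≃ₗ[ℝ] V, d ∈ D ∧ d x₀ = y})
    (N : V → ℝ) (hN : ∀ c : ℝ, 0 ≤ c → ∀ u ∈ l, N (c • u) = c)
    (b : V → V → ℝ)
    (hb : ∀ v w : V, v ≠ 0 → b v w = (N v) ^ 2 * α v w / 2)
    (hb0 : ∀ w : V, b 0 w = 0) :
    (∀ v : V, b v v = (N v) ^ 2) ∧
    (∀ v w : V, b v w = b w v) ∧
    (∀ v w w' : V, b v (w + w') = b v w + b v w') ∧
    (∀ (c : ℝ) (v w : V), b v (c • w) = c * b v w) ∧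
    (∀ v : V, v ≠ 0 → 0 < b v v) ∧
    (∀ d : V ≃ₗ[ℝ] V, d ∈ D → ∀ v w : V, b (d v) (d w) = b v w) := by
  have h : IsHalfTurnFamily D r α :=
    ⟨fun v hv => (hr v hv).1, fun v hv => (hr v hv).2.1, fun v hv => (hr v hv).2.2, hα⟩
  have hgauge : IsInvariantGauge D N :=
    hD.isInvariantGauge_of_orbit (by omega) hx₀ fun c hc d hd =>
      hN c hc _ (hl ▸ ⟨d, hd, rfl⟩)
  have hb' : ∀ v w, b v w = N v ^ 2 * α v w / 2 := by
    intro v w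
    rcases eq_or_ne v 0 with rfl | hv
    · simp [hb0, hgauge.apply_zero]
    · exact hb v w hv
  have hself : ∀ v, b v v = N v ^ 2 := by
    intro v
    rcases eq_or_ne v 0 with rfl | hv
    · simp [hb0, hgauge.apply_zero]
    · rw [hb', h.alpha_self hv]
      ring
  refine ⟨hself, fun v w => ?_, fun v w w' => ?_, fun c v w => ?_, fun v hv => ?_,
    fun d hd v w => ?_⟩
  · rw [hb', hb', h.sq_mul_alpha_comm hD hdim hgauge]
  · rw [hb', hb', hb', map_add]
    ring
  · rw [hb', hb', map_smul, smul_eq_mul]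
    ring
  · rw [hself]
    exact pow_pos (hgauge.pos v hv) 2
  · rcases eq_or_ne v 0 with rfl | hv
    · simp [hb0]
    · rw [hb', hb', hgauge.map d hd, h.alpha_map hD (by omega) hd hv]
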